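/- arXiv:2602.17346 — 11 statements merged into one kernel-verified Lean document; each statement's English description precedes it below -/
import Mathlib

section
/- For any finite nonempty set V and any partial characteristic function x̃ (a map from some subset of P_V to {0,1}), the set of completions X_V[x̃] is nonempty if and only if x̃^{-1}(0) ∩ tc(x̃^{-1}(1)) = ∅. -/
open scoped Classical

/-- The set of ordered pairs of distinct elements of `V`. -/
def PV (V : Type*) : Set (V × V) := {pq | pq.1 ≠ pq.2}

/-- Characteristic functions of preorders on `V`: values in `{0,1}` on pairs of distinct
elements, value `1` on the diagonal (by convention), and the transitivity inequalities. -/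
def XV (V : Type*) : Set (V × V → ℝ) :=
  {x | (∀ a : V, x (a, a) = 1) ∧
       (∀ pq : V × V, pq.1 ≠ pq.2 → x pq = 0 ∨ x pq = 1) ∧
       (∀ p q r : V, p ≠ q → p ≠ r → q ≠ r → x (p, q) + x (q, r) - x (p, r) ≤ 1)}

/-- Completions of the partial characteristic function with `x̃⁻¹(0) = E0` and `x̃⁻¹(1) = E1`. -/
def completions {V : Type*} (E0 E1 : Set (V × V)) : Set (V × V → ℝ) :=
  {x | x ∈ XV V ∧ (∀ e ∈ E0, x e = 0) ∧ (∀ e ∈ E1, x e = 1)}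

/-- There is a (possibly trivial) directed path from `p` to `q` in the digraph `(V, E)`. -/
def reach {V : Type*} (E : Set (V × V)) (p q : V) : Prop :=
  Relation.ReflTransGen (fun a b => (a, b) ∈ E) p q

/-- Transitive closure of an edge set. -/
def tc {V : Type*} (E : Set (V × V)) : Set (V × V) :=
  {pq | pq ∈ PV V ∧ reach E pq.1 pq.2}

/-- A pair is decided by the partial characteristic function `(E0, E1)`. -/
def decidedPair {V : Type*} (E0 E1 : Set (V × V)) (pq : V × V) : Prop :=
  ∀ x ∈ completions E0 E1, ∀ x' ∈ completions E0 E1, x pq = x' pq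

/-- The partial characteristic function `(E0, E1)` is maximally specific. -/
def maxSpecific {V : Type*} (E0 E1 : Set (V × V)) : Prop :=
  {pq | pq ∈ PV V ∧ decidedPair E0 E1 pq} = E0 ∪ E1

/-- Objective function of the preordering problem. -/
noncomputable def phi {V : Type*} [Fintype V] (c x : V × V → ℝ) : ℝ :=
  ∑ pq ∈ Finset.univ.filter (fun pq : V × V => pq.1 ≠ pq.2), c pq * x pq

/-- `δ(U, V \ U)`. -/
def dicut {V : Type*} (U : Set V) : Set (V × V) := {pq | pq.1 ∈ U ∧ pq.2 ∉ U}

/-- Elementary dicut map. -/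
noncomputable def sigmaCut {V : Type*} (U : Set V) (x : V × V → ℝ) : V × V → ℝ :=
  fun pq => if pq.1 ∈ U ∧ pq.2 ∉ U then 0 else x pq

/-- Elementary join map. -/
noncomputable def sigmaJoin {V : Type*} (i j : V) (x : V × V → ℝ) : V × V → ℝ :=
  fun pq => if x (pq.1, i) = 1 ∧ x (j, pq.2) = 1 then 1 else x pq

/-- `P_{ab}[σ]`: pairs whose value can change from `a` to `b` under `σ`. -/
def Pmove {V : Type*} (E0 E1 : Set (V × V)) (σ : (V × V → ℝ) → (V × V → ℝ)) (a b : ℝ) :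
    Set (V × V) :=
  {e | e ∈ PV V ∧ ∃ x ∈ completions E0 E1, x e = a ∧ σ x e = b}

/-- Restriction of a set of pairs to `U × U`. -/
def resSet {V : Type*} (U : Set V) (E : Set (V × V)) : Set (↥U × ↥U) :=
  {pq | ((pq.1 : V), (pq.2 : V)) ∈ E}

/-- The set of completions is nonempty iff `x̃⁻¹(0) ∩ tc(x̃⁻¹(1)) = ∅`. -/
theorem stmt2 {V : Type*} [Fintype V] [Nonempty V]
    (E0 E1 : Set (V × V)) (hE0 : E0 ⊆ PV V) (hE1 : E1 ⊆ PV V)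
    (hdisj : Disjoint E0 E1) :
    (completions E0 E1).Nonempty ↔ E0 ∩ tc E1 = ∅ := by
  constructor
  · rintro ⟨x, ⟨⟨hdiag, h01, htr⟩, hx0, hx1⟩⟩
    ext pq
    simp only [Set.mem_inter_iff, Set.mem_empty_iff_false, iff_false, not_and]
    rintro h0 ⟨hne, hreach⟩
    have key : ∀ p q : V, reach E1 p q → x (p, q) = 1 := by
      intro p q h
      induction h with
      | refl => exact hdiag p
      | tail hab hbc ih =>
        rename_i b c
        by_cases hpc : p = c
        · subst hpc; exact hdiag p
        by_cases hpb : p = b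
        · subst hpb; exact hx1 _ hbc
        have hbc' : b ≠ c := hE1 hbc
        have ht := htr p b c hpb hpc hbc'
        rw [ih, hx1 _ hbc] at ht
        rcases h01 (p, c) hpc with h | h
        · rw [h] at ht; norm_num at ht
        · exact h
    have := hx0 pq h0
    rw [key pq.1 pq.2 hreach] at this
    norm_num at this
  · intro hempty
    refine ⟨fun pq => if reach E1 pq.1 pq.2 then 1 else 0, ⟨?_, ?_, ?_⟩, ?_, ?_⟩
    · intro a; exact if_pos Relation.ReflTransGen.refl
    · intro pq _; by_cases h : reach E1 pq.1 pq.2 <;> simp [h]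
    · intro p q r hpq hpr hqr
      by_cases h1 : reach E1 p q <;> by_cases h2 : reach E1 q r
      · have h3 : reach E1 p r := h1.trans h2
        simp [h1, h2, h3]
      all_goals simp [h1, h2]; split <;> norm_num
    · intro e he
      have hne : e.1 ≠ e.2 := hE0 he
      have : ¬ reach E1 e.1 e.2 := by
        intro hr
        have : e ∈ E0 ∩ tc E1 := ⟨he, hne, hr⟩
        rw [hempty] at this; exact this
      simp [this]
    · intro e he
      have : reach E1 e.1 e.2 := Relation.ReflTransGen.single he
      simp [this]
end

section
/- Let V be a finite nonempty set and x̃ ∈ X̃_V. Then x̃ is maximally specific if and only if the following two conditions hold: (i) x̃^{-1}(1) = {pq ∈ P_V : there is a directed path from p to q in the digraph (V, x̃^{-1}(1))}, and (ii) x̃^{-1}(0) = {pq ∈ P_V : there exists p'q' ∈ x̃^{-1}(0) such that in the digraph (V, x̃^{-1}(1)) there is a (possibly trivial) directed path from p' to p and a (possibly trivial) directed path from q to q'}. -/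
open scoped Classical

lemma xv_one {V : Type*} {x : V × V → ℝ} (hx : x ∈ XV V) {a b c : V}
    (hab : x (a, b) = 1) (hbc : x (b, c) = 1) : x (a, c) = 1 := by
  obtain ⟨hd, h01, htri⟩ := hx
  by_cases h1 : a = b; · subst h1; exact hbc
  by_cases h2 : b = c; · subst h2; exact hab
  by_cases h3 : a = c; · subst h3; exact hd a
  have ht := htri a b c h1 h3 h2
  rcases h01 (a, c) h3 with h | h
  · rw [hab, hbc, h] at ht; norm_num at ht
  · exact h

lemma reach_one {V : Type*} {x : V × V → ℝ} (hx : x ∈ XV V) {E : Set (V × V)}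
    (hE : ∀ e ∈ E, x e = 1) {p q : V} (h : reach E p q) : x (p, q) = 1 := by
  induction h with
  | refl => exact hx.1 p
  | tail h1 h2 ih => exact xv_one hx ih (hE _ h2)

noncomputable def charFun {V : Type*} (E : Set (V × V)) : V × V → ℝ :=
  fun pq => if pq.1 = pq.2 ∨ reach E pq.1 pq.2 then 1 else 0

lemma charFun_mem {V : Type*} (E : Set (V × V)) : charFun E ∈ XV V := by
  refine ⟨fun a => by simp [charFun], fun pq hpq => by
    by_cases h : pq.1 = pq.2 ∨ reach E pq.1 pq.2 <;> simp [charFun, h], ?_⟩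
  intro p q r hpq hpr hqr
  by_cases h1 : p = q ∨ reach E p q
  · by_cases h2 : q = r ∨ reach E q r
    · have h3 : reach E p r := by
        rcases h1 with h1 | h1
        · rcases h2 with h2 | h2; · exact absurd (h1.trans h2) hpr
          · exact h1 ▸ h2
        · rcases h2 with h2 | h2; · exact h2 ▸ h1
          · exact h1.trans h2
      simp [charFun, h1, h2, h3]
    · simp only [charFun, if_pos h1, if_neg h2]
      by_cases h3 : p = r ∨ reach E p r <;> simp [h3]
  · simp only [charFun, if_neg h1]
    by_cases h2 : q = r ∨ reach E q r <;>
    by_cases h3 : p = r ∨ reach E p r <;> simp [h2, h3]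

lemma reach_union_single {V : Type*} {E : Set (V × V)} {p q u v : V}
    (h : reach (E ∪ {(p, q)}) u v) :
    reach E u v ∨ (reach E u p ∧ reach E q v) := by
  induction h with
  | refl => exact Or.inl .refl
  | tail h1 h2 ih =>
    rcases h2 with h2 | h2
    · rcases ih with ih | ⟨ih1, ih2⟩
      · exact Or.inl (ih.tail h2)
      · exact Or.inr ⟨ih1, ih2.tail h2⟩
    · rw [Set.mem_singleton_iff, Prod.mk.injEq] at h2
      obtain ⟨hw, hv⟩ := h2
      subst hw; subst hv
      rcases ih with ih | ⟨ih1, _⟩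
      · exact Or.inr ⟨ih, .refl⟩
      · exact Or.inr ⟨ih1, .refl⟩

/-- Characterization of maximal specificity. -/
theorem stmt3 {V : Type*} [Fintype V] [Nonempty V]
    (E0 E1 : Set (V × V)) (hE0 : E0 ⊆ PV V) (hE1 : E1 ⊆ PV V)
    (hdisj : Disjoint E0 E1)
    (hne : (completions E0 E1).Nonempty) :
    maxSpecific E0 E1 ↔
      (E1 = {pq | pq ∈ PV V ∧ reach E1 pq.1 pq.2} ∧
       E0 = {pq | pq ∈ PV V ∧ ∃ e ∈ E0, reach E1 e.1 pq.1 ∧ reach E1 pq.2 e.2}) := by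
  classical
  -- every completion gives 1 to reachable pairs
  have hreach1 : ∀ x ∈ completions E0 E1, ∀ p q : V, reach E1 p q → x (p, q) = 1 :=
    fun x hx p q h => reach_one hx.1 hx.2.2 h
  -- every completion gives 0 to pairs in the E0-closure
  have hclos0 : ∀ x ∈ completions E0 E1, ∀ pq : V × V, pq ∈ PV V →
      (∃ e ∈ E0, reach E1 e.1 pq.1 ∧ reach E1 pq.2 e.2) → x pq = 0 := by
    rintro x hx ⟨p, q⟩ hpv ⟨e, he, h1, h2⟩
    rcases hx.1.2.1 (p, q) hpv with h | h
    · exact h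
    · exfalso
      have hx1 : x (e.1, p) = 1 := hreach1 x hx _ _ h1
      have hx2 : x (q, e.2) = 1 := hreach1 x hx _ _ h2
      have : x (e.1, e.2) = 1 := xv_one hx.1 (xv_one hx.1 hx1 h) hx2
      have h0 : x e = 0 := hx.2.1 e he
      rw [show ((e.1, e.2) : V × V) = e from rfl] at this
      rw [h0] at this; norm_num at this
  obtain ⟨y, hy⟩ := hne
  constructor
  · intro hms
    have hms' := Set.ext_iff.mp hms
    constructor
    · ext pq
      constructor
      · intro h
        exact ⟨hE1 h, Relation.ReflTransGen.single h⟩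
      · rintro ⟨hpv, hr⟩
        have hdec : decidedPair E0 E1 pq := by
          intro x hx x' hx'
          rw [show pq = (pq.1, pq.2) from rfl, hreach1 x hx _ _ hr, hreach1 x' hx' _ _ hr]
        rcases (hms' pq).mp ⟨hpv, hdec⟩ with h | h
        · exfalso
          have := hy.2.1 pq h
          have := hreach1 y hy _ _ hr
          rw [show ((pq.1, pq.2) : V × V) = pq from rfl] at this
          linarith
        · exact h
    · ext pq
      constructor
      · intro h
        exact ⟨hE0 h, pq, h, .refl, .refl⟩
      · rintro ⟨hpv, hcl⟩
        have hdec : decidedPair E0 E1 pq := by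
          intro x hx x' hx'
          rw [hclos0 x hx pq hpv hcl, hclos0 x' hx' pq hpv hcl]
        rcases (hms' pq).mp ⟨hpv, hdec⟩ with h | h
        · exact h
        · exfalso
          have h1 := hy.2.2 pq h
          have h0 := hclos0 y hy pq hpv hcl
          rw [h1] at h0; norm_num at h0
  · rintro ⟨h1, h0⟩
    apply Set.Subset.antisymm
    · rintro ⟨p, q⟩ ⟨hpv, hdec⟩
      -- the minimal completion
      have hmin : charFun E1 ∈ completions E0 E1 := by
        refine ⟨charFun_mem E1, ?_, ?_⟩
        · intro e he
          have hne' : ¬ (e.1 = e.2 ∨ reach E1 e.1 e.2) := by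
            rintro (h | h)
            · exact hE0 he h
            · have := hreach1 y hy _ _ h
              have h0 := hy.2.1 e he
              rw [show ((e.1, e.2) : V × V) = e from rfl, h0] at this
              norm_num at this
          simp only [charFun]; exact if_neg hne'
        · intro e he
          simp only [charFun]
          exact if_pos (Or.inr (Relation.ReflTransGen.single he : reach E1 e.1 e.2))
      by_cases hr : reach E1 p q
      · exact Or.inr (h1 ▸ (⟨hpv, hr⟩ : (p,q) ∈ {pq | pq ∈ PV V ∧ reach E1 pq.1 pq.2}))
      by_cases hin0 : (p, q) ∈ E0
      · exact Or.inl hin0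
      exfalso
      -- build completion with value 1 at (p,q)
      have hmax : charFun (E1 ∪ {(p, q)}) ∈ completions E0 E1 := by
        refine ⟨charFun_mem _, ?_, ?_⟩
        · intro e he
          have hne' : ¬ (e.1 = e.2 ∨ reach (E1 ∪ {(p, q)}) e.1 e.2) := by
            rintro (h | h)
            · exact hE0 he h
            · rcases reach_union_single h with h | ⟨ha, hb⟩
              · have := hreach1 y hy _ _ h
                have h0 := hy.2.1 e he
                rw [show ((e.1, e.2) : V × V) = e from rfl, h0] at this
                norm_num at this
              · exact hin0 (h0 ▸ (⟨hpv, e, he, ha, hb⟩ :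
                  (p,q) ∈ {pq | pq ∈ PV V ∧ ∃ e ∈ E0, reach E1 e.1 pq.1 ∧ reach E1 pq.2 e.2}))
          simp only [charFun]; exact if_neg hne'
        · intro e he
          have : reach (E1 ∪ {(p, q)}) e.1 e.2 :=
            Relation.ReflTransGen.single (Or.inl he)
          simp only [charFun]; exact if_pos (Or.inr this)
      have heq := hdec _ hmin _ hmax
      have hv1 : charFun E1 (p, q) = 0 := by
        simp only [charFun]
        exact if_neg (by rintro (h | h); exacts [hpv h, hr h])
      have hv2 : charFun (E1 ∪ {(p, q)}) (p, q) = 1 := by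
        have : reach (E1 ∪ {(p, q)}) p q :=
          Relation.ReflTransGen.single (Or.inr rfl)
        simp only [charFun]; exact if_pos (Or.inr this)
      rw [hv1, hv2] at heq; norm_num at heq
    · rintro pq (h | h)
      · refine ⟨hE0 h, fun x hx x' hx' => ?_⟩
        rw [hx.2.1 pq h, hx'.2.1 pq h]
      · refine ⟨hE1 h, fun x hx x' hx' => ?_⟩
        rw [hx.2.2 pq h, hx'.2.2 pq h]
end

section
/- For every finite nonempty set V, every ij ∈ P_V and every x ∈ X_V, the element σ_{ij}(x) belongs to X_V; that is, the elementary join map is well-defined as a map X_V → X_V. -/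
open scoped Classical

private lemma trans3 {V : Type*} {x : V × V → ℝ} (hx : x ∈ XV V) :
    ∀ a b c : V, x (a, b) = 1 → x (b, c) = 1 → x (a, c) = 1 := by
  obtain ⟨hd, h01, ht⟩ := hx
  intro a b c hab hbc
  by_cases h1 : a = b; · subst h1; exact hbc
  by_cases h2 : b = c; · subst h2; exact hab
  by_cases h3 : a = c; · subst h3; exact hd a
  have := ht a b c h1 h3 h2
  rcases h01 (a, c) h3 with h | h
  · linarith
  · exact h

/-- The elementary join map is well-defined: it maps `X_V` into `X_V`. -/
theorem stmt6 {V : Type*} [Fintype V] [Nonempty V] (i j : V) (hij : i ≠ j)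
    (x : V × V → ℝ) (hx : x ∈ XV V) :
    sigmaJoin i j x ∈ XV V := by
  obtain ⟨hd, h01, ht⟩ := hx
  have hxX : x ∈ XV V := ⟨hd, h01, ht⟩
  have hy01 : ∀ pq : V × V, pq.1 ≠ pq.2 → sigmaJoin i j x pq = 0 ∨ sigmaJoin i j x pq = 1 := by
    intro pq hpq
    unfold sigmaJoin
    split
    · right; rfl
    · exact h01 pq hpq
  have key : ∀ a b c : V, sigmaJoin i j x (a, b) = 1 → sigmaJoin i j x (b, c) = 1 →
      sigmaJoin i j x (a, c) = 1 := by
    intro a b c hab hbc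
    unfold sigmaJoin at hab hbc ⊢
    by_cases hcnd : x (a, i) = 1 ∧ x (j, c) = 1
    · simp [hcnd]
    rw [if_neg hcnd]
    split_ifs at hab hbc with h1 h2 h2
    · exact absurd ⟨h1.1, h2.2⟩ hcnd
    · exact absurd ⟨h1.1, trans3 hxX j b c h1.2 hbc⟩ hcnd
    · exact absurd ⟨trans3 hxX a b i hab h2.1, h2.2⟩ hcnd
    · exact trans3 hxX a b c hab hbc
  refine ⟨?_, hy01, ?_⟩
  · intro a
    unfold sigmaJoin
    split
    · rfl
    · exact hd a
  · intro p q r hpq hpr hqr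
    rcases hy01 (p, q) hpq with ha | ha <;> rcases hy01 (q, r) hqr with hb | hb <;>
      rcases hy01 (p, r) hpr with hc | hc
    all_goals first
      | linarith
      | (have := key p q r ha hb; linarith)
end

section
/- Let V be a finite nonempty set, x̂ ∈ X̂_V and U ⊆ V. If δ(U, V\U) ∩ x̂^{-1}(1) = ∅, then the elementary dicut map σ_{δ(U,V\U)} is true to x̂, i.e., σ_{δ(U,V\U)}(X_V[x̂]) ⊆ X_V[x̂]. -/
open scoped Classical

/-- The elementary dicut map is true to `x̂` if the dicut contains no pair of `x̂⁻¹(1)`. -/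
theorem stmt8 {V : Type*} [Fintype V] [Nonempty V]
    (E0 E1 : Set (V × V)) (hE0 : E0 ⊆ PV V) (hE1 : E1 ⊆ PV V)
    (hdisj : Disjoint E0 E1)
    (hne : (completions E0 E1).Nonempty)
    (hms : maxSpecific E0 E1)
    (U : Set V) (hcut : dicut U ∩ E1 = ∅) :
    ∀ x ∈ completions E0 E1, sigmaCut U x ∈ completions E0 E1 := by
  rintro x ⟨⟨hdiag, h01, htr⟩, h0, h1⟩
  have hle : ∀ pq : V × V, pq.1 ≠ pq.2 → sigmaCut U x pq ≤ x pq := by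
    intro pq hpq
    unfold sigmaCut
    split
    · rcases h01 pq hpq with h | h <;> simp [h]
    · exact le_refl _
  refine ⟨⟨?_, ?_, ?_⟩, ?_, ?_⟩
  · intro a
    simp only [sigmaCut]
    rw [if_neg (by tauto)]
    exact hdiag a
  · intro pq hpq
    unfold sigmaCut
    split
    · exact Or.inl rfl
    · exact h01 pq hpq
  · intro p q r hpq hpr hqr
    by_cases hc : p ∈ U ∧ r ∉ U
    · have hpr0 : sigmaCut U x (p, r) = 0 := by simp [sigmaCut, hc]
      by_cases hq : q ∈ U
      · have hqr0 : sigmaCut U x (q, r) = 0 := by simp [sigmaCut, hq, hc.2]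
        have : sigmaCut U x (p, q) ≤ 1 := by
          refine le_trans (hle (p, q) hpq) ?_
          rcases h01 (p, q) hpq with h | h <;> simp [h]
        linarith
      · have hpq0 : sigmaCut U x (p, q) = 0 := by simp [sigmaCut, hc.1, hq]
        have : sigmaCut U x (q, r) ≤ 1 := by
          refine le_trans (hle (q, r) hqr) ?_
          rcases h01 (q, r) hqr with h | h <;> simp [h]
        linarith
    · have hpr' : sigmaCut U x (p, r) = x (p, r) := by simp [sigmaCut, hc]
      have h1 := hle (p, q) hpq
      have h2 := hle (q, r) hqr
      have h3 := htr p q r hpq hpr hqr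
      linarith
  · intro e he
    have hd := (hE0 he : e.1 ≠ e.2)
    have := hle e hd
    have hx0 := h0 e he
    have : sigmaCut U x e = 0 ∨ sigmaCut U x e = x e := by
      unfold sigmaCut; split
      · exact Or.inl rfl
      · exact Or.inr rfl
    rcases this with h | h <;> simp [h, hx0]
  · intro e he
    have hne' : e ∉ dicut U := by
      intro hmem
      have : e ∈ dicut U ∩ E1 := ⟨hmem, he⟩
      rw [hcut] at this
      exact this
    have : ¬(e.1 ∈ U ∧ e.2 ∉ U) := hne'
    simp only [sigmaCut, if_neg this]
    exact h1 e he
end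

section
/- Let V be a finite nonempty set, c : P_V → ℝ, x̂ ∈ X̂_V, U ⊆ V and ij ∈ δ(U, V\U) \ dom(x̂). If δ(U, V\U) ∩ x̂^{-1}(1) = ∅ and c_{ij}⁻ ≥ Σ_{pq ∈ δ(U, V\U) \ x̂^{-1}(0)} c_{pq}⁺, then there exists a maximizer x* of φ_c over X_V[x̂] with x*_{ij} = 0. -/
open scoped Classical

/-- Cut condition (Proposition 6 of the paper). -/
theorem stmt9 {V : Type*} [Fintype V] [Nonempty V]
    (E0 E1 : Set (V × V)) (hE0 : E0 ⊆ PV V) (hE1 : E1 ⊆ PV V)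
    (hdisj : Disjoint E0 E1)
    (hne : (completions E0 E1).Nonempty)
    (hms : maxSpecific E0 E1)
    (c : V × V → ℝ) (U : Set V) (i j : V)
    (hijcut : (i, j) ∈ dicut U) (hdom : (i, j) ∉ E0 ∪ E1)
    (hcut : dicut U ∩ E1 = ∅)
    (hcond : max (-(c (i, j))) 0 ≥
      ∑ pq ∈ Finset.univ.filter (fun pq : V × V => pq ∈ dicut U ∧ pq ∉ E0), max (c pq) 0) :
    ∃ xs ∈ completions E0 E1,
      (∀ x ∈ completions E0 E1, phi c x ≤ phi c xs) ∧ xs (i, j) = 0 := by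
  classical
  -- completions is finite
  have hfin : (completions E0 E1).Finite := by
    apply Set.Finite.subset
      (Set.finite_range (fun (f : V × V → Bool) (pq : V × V) => if f pq then (1:ℝ) else 0))
    intro x hx
    refine ⟨fun pq => decide (x pq = 1), ?_⟩
    funext pq
    by_cases hd : pq.1 = pq.2
    · have h1 : x pq = 1 := by
        have := hx.1.1 pq.1
        rwa [show (pq.1, pq.1) = pq from Prod.ext rfl hd] at this
      simp [h1]
    · rcases hx.1.2.1 pq hd with h | h <;> simp [h]
  obtain ⟨xm, hxm, hmax⟩ := Set.exists_max_image _ (phi c) hfin hne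
  obtain ⟨⟨hdiag, h01, htri⟩, hxE0, hxE1⟩ := hxm
  have hij : i ≠ j := by
    rintro rfl; exact hijcut.2 hijcut.1
  -- basic bounds
  have hle1 : ∀ pq : V × V, xm pq ≤ 1 := by
    intro pq
    by_cases hd : pq.1 = pq.2
    · rw [show pq = (pq.1, pq.1) from Prod.ext rfl hd.symm, hdiag]
    · rcases h01 pq hd with h | h <;> rw [h] <;> norm_num
  have h0le : ∀ pq : V × V, 0 ≤ xm pq := by
    intro pq
    by_cases hd : pq.1 = pq.2
    · rw [show pq = (pq.1, pq.1) from Prod.ext rfl hd.symm, hdiag]; norm_num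
    · rcases h01 pq hd with h | h <;> rw [h] <;> norm_num
  by_cases hij0 : xm (i, j) = 0
  · exact ⟨xm, ⟨⟨hdiag, h01, htri⟩, hxE0, hxE1⟩, hmax, hij0⟩
  have hij1 : xm (i, j) = 1 := (h01 (i, j) hij).resolve_left hij0
  -- the cut-modified function
  set x' := sigmaCut U xm with hx'
  have hx'val : ∀ pq : V × V, x' pq = if pq.1 ∈ U ∧ pq.2 ∉ U then 0 else xm pq := fun _ => rfl
  have hx'mem : x' ∈ completions E0 E1 := by
    refine ⟨⟨?_, ?_, ?_⟩, ?_, ?_⟩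
    · intro a
      rw [hx'val, if_neg (by rintro ⟨h1, h2⟩; exact h2 h1)]
      exact hdiag a
    · intro pq hd
      rw [hx'val]
      split
      · exact Or.inl rfl
      · exact h01 pq hd
    · intro p q r hpq hpr hqr
      rw [hx'val (p, q), hx'val (q, r), hx'val (p, r)]
      by_cases hP : p ∈ U ∧ r ∉ U
      · rw [if_pos hP]
        by_cases hq : q ∈ U
        · rw [if_pos (show (q, r).1 ∈ U ∧ (q, r).2 ∉ U from ⟨hq, hP.2⟩)]
          have := hle1 (p, q)
          split <;> linarith
        · rw [if_pos (show (p, q).1 ∈ U ∧ (p, q).2 ∉ U from ⟨hP.1, hq⟩)]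
          have := hle1 (q, r)
          split <;> linarith
      · rw [if_neg hP]
        have h1 := htri p q r hpq hpr hqr
        have h2 := h0le (p, q)
        have h3 := h0le (q, r)
        split <;> split <;> linarith
    · intro e he
      rw [hx'val]
      split
      · rfl
      · exact hxE0 e he
    · intro e he
      rw [hx'val, if_neg]
      · exact hxE1 e he
      · intro hcontra
        have : e ∈ dicut U ∩ E1 := ⟨hcontra, he⟩
        rw [hcut] at this
        exact this
  -- sum bookkeeping
  set F : Finset (V × V) := Finset.univ.filter (fun pq : V × V => pq.1 ≠ pq.2) with hF
  set G : Finset (V × V) := F.filter (fun pq => pq ∈ dicut U) with hG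
  set H : Finset (V × V) := Finset.univ.filter (fun pq : V × V => pq ∈ dicut U ∧ pq ∉ E0) with hH
  have hdine : ∀ pq : V × V, pq ∈ dicut U → pq.1 ≠ pq.2 := by
    intro pq hpq heq; exact hpq.2 (heq ▸ hpq.1)
  have hijG : (i, j) ∈ G := by
    simp only [hG, hF, Finset.mem_filter, Finset.mem_univ, true_and]
    exact ⟨hij, hijcut⟩
  have hijH : (i, j) ∈ H := by
    simp only [hH, Finset.mem_filter, Finset.mem_univ, true_and]
    exact ⟨hijcut, fun h => hdom (Or.inl h)⟩
  -- key sum bound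
  have hkey : ∑ pq ∈ G, c pq * xm pq ≤ 0 := by
    have e1 : ∑ pq ∈ G.erase (i, j), c pq * xm pq + c (i, j) * xm (i, j)
        = ∑ pq ∈ G, c pq * xm pq := Finset.sum_erase_add G _ hijG
    have e2 : ∑ pq ∈ G.erase (i, j), c pq * xm pq
        ≤ ∑ pq ∈ G.erase (i, j), (if pq ∈ E0 then 0 else max (c pq) 0) := by
      apply Finset.sum_le_sum
      intro pq _
      by_cases hE : pq ∈ E0
      · rw [if_pos hE, hxE0 pq hE, mul_zero]
      · rw [if_neg hE]
        calc c pq * xm pq ≤ max (c pq) 0 * xm pq := by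
              apply mul_le_mul_of_nonneg_right (le_max_left _ _) (h0le pq)
          _ ≤ max (c pq) 0 * 1 := by
              apply mul_le_mul_of_nonneg_left (hle1 pq) (le_max_right _ _)
          _ = max (c pq) 0 := mul_one _
    have e3 : ∑ pq ∈ G.erase (i, j), (if pq ∈ E0 then 0 else max (c pq) 0)
        = ∑ pq ∈ (G.erase (i, j)).filter (fun pq => pq ∉ E0), max (c pq) 0 := by
      rw [Finset.sum_filter]
      apply Finset.sum_congr rfl
      intro pq _
      by_cases hE : pq ∈ E0 <;> simp [hE]
    have e4 : ∑ pq ∈ (G.erase (i, j)).filter (fun pq => pq ∉ E0), max (c pq) 0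
        ≤ ∑ pq ∈ H.erase (i, j), max (c pq) 0 := by
      apply Finset.sum_le_sum_of_subset_of_nonneg
      · intro pq hpq
        simp only [Finset.mem_filter, Finset.mem_erase, hG, hF, Finset.mem_filter,
          Finset.mem_univ, true_and, hH] at hpq ⊢
        tauto
      · intro pq _ _
        exact le_max_right _ _
    have e5 : ∑ pq ∈ H.erase (i, j), max (c pq) 0 + max (c (i, j)) 0
        = ∑ pq ∈ H, max (c pq) 0 := Finset.sum_erase_add H _ hijH
    have e6 : ∑ pq ∈ H, max (c pq) 0 ≤ max (-(c (i, j))) 0 := hcond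
    have e7 : max (-(c (i, j))) 0 - max (c (i, j)) 0 = -(c (i, j)) := by
      rcases le_total (c (i, j)) 0 with h | h
      · rw [max_eq_left (by linarith), max_eq_right h]; ring
      · rw [max_eq_right (by linarith), max_eq_left h]; ring
    rw [hij1] at e1
    linarith
  -- phi comparison
  have hphi : phi c xm ≤ phi c x' := by
    have hsplit : phi c xm - phi c x' = ∑ pq ∈ G, c pq * xm pq := by
      rw [hG, Finset.sum_filter]
      unfold phi
      rw [← Finset.sum_sub_distrib]
      apply Finset.sum_congr rfl
      intro pq _
      rw [hx'val]
      by_cases hP : pq ∈ dicut U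
      · rw [if_pos hP, if_pos (show pq.1 ∈ U ∧ pq.2 ∉ U from hP), mul_zero, sub_zero]
      · rw [if_neg hP, if_neg (show ¬(pq.1 ∈ U ∧ pq.2 ∉ U) from hP)]; ring
    linarith
  refine ⟨x', hx'mem, ?_, ?_⟩
  · intro y hy
    exact le_trans (hmax y hy) hphi
  · exact if_pos hijcut
end

section
/- Let V be a finite nonempty set, c : P_V → ℝ, x̂ ∈ X̂_V and U ⊆ V with x̂^{-1}(1) ∩ δ(U, V\U) = ∅. If c_{ij} ≤ 0 for every ij ∈ δ(U, V\U) \ x̂^{-1}(0), then there exists a maximizer x* of φ_c over X_V[x̂] such that x*_{ij} = 0 for all ij ∈ δ(U, V\U) \ x̂^{-1}(0). -/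
open scoped Classical

/-!
Cutting the dicut `δ(U, V \ U)` out of a preorder yields a preorder again: if `p ∈ U`,
`r ∉ U` and `p ≤ q ≤ r`, then one of the pairs `pq`, `qr` lies in the dicut as well. Applied to
a maximizer of `φ_c` over the completions, the cut keeps it a completion (no pair of the dicut
is fixed to `1`) and cannot decrease `φ_c`, since it only switches off pairs of nonpositive cost
that are not fixed to `0`.
-/

theorem eq_zero_or_eq_one_of_mem_XV {V : Type*} {x : V × V → ℝ} (hx : x ∈ XV V)
    (pq : V × V) : x pq = 0 ∨ x pq = 1 := by
  obtain ⟨hdiag, h01, -⟩ := hx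
  by_cases hpq : pq.1 = pq.2
  · exact .inr (by rw [show pq = (pq.1, pq.1) from Prod.ext rfl hpq.symm, hdiag])
  · exact h01 pq hpq

theorem nonneg_of_mem_XV {V : Type*} {x : V × V → ℝ} (hx : x ∈ XV V) (pq : V × V) :
    0 ≤ x pq := by
  rcases eq_zero_or_eq_one_of_mem_XV hx pq with h | h <;> simp [h]

theorem le_one_of_mem_XV {V : Type*} {x : V × V → ℝ} (hx : x ∈ XV V) (pq : V × V) :
    x pq ≤ 1 := by
  rcases eq_zero_or_eq_one_of_mem_XV hx pq with h | h <;> simp [h]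

theorem XV_finite (V : Type*) [Finite V] : (XV V).Finite :=
  (Set.Finite.pi fun _ => Set.toFinite ({0, 1} : Set ℝ)).subset
    fun _ hx pq _ => eq_zero_or_eq_one_of_mem_XV hx pq

theorem sigmaCut_of_mem_dicut {V : Type*} {U : Set V} (x : V × V → ℝ) {pq : V × V}
    (h : pq ∈ dicut U) : sigmaCut U x pq = 0 :=
  if_pos h

theorem sigmaCut_of_notMem_dicut {V : Type*} {U : Set V} (x : V × V → ℝ) {pq : V × V}
    (h : pq ∉ dicut U) : sigmaCut U x pq = x pq :=
  if_neg h

theorem sigmaCut_apply_le {V : Type*} (U : Set V) {x : V × V → ℝ} {pq : V × V}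
    (hx : 0 ≤ x pq) : sigmaCut U x pq ≤ x pq := by
  unfold sigmaCut
  split_ifs
  exacts [hx, le_rfl]

theorem sigmaCut_mem_XV {V : Type*} (U : Set V) {x : V × V → ℝ} (hx : x ∈ XV V) :
    sigmaCut U x ∈ XV V := by
  have ⟨hdiag, h01, htrans⟩ := hx
  refine ⟨fun a => ?_, fun pq hpq => ?_, fun p q r hpq hpr hqr => ?_⟩
  · rw [sigmaCut_of_notMem_dicut x fun h => h.2 h.1, hdiag]
  · by_cases h : pq ∈ dicut U
    · exact .inl (sigmaCut_of_mem_dicut x h)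
    · rw [sigmaCut_of_notMem_dicut x h]
      exact h01 pq hpq
  have hcut_le : ∀ pq, sigmaCut U x pq ≤ x pq := fun pq =>
    sigmaCut_apply_le U (nonneg_of_mem_XV hx pq)
  by_cases hcut : (p, r) ∈ dicut U
  · rw [sigmaCut_of_mem_dicut x hcut]
    obtain ⟨hp, hr⟩ := hcut
    by_cases hq : q ∈ U
    · rw [sigmaCut_of_mem_dicut x (show (q, r) ∈ dicut U from ⟨hq, hr⟩)]
      linarith [hcut_le (p, q), le_one_of_mem_XV hx (p, q)]
    · rw [sigmaCut_of_mem_dicut x (show (p, q) ∈ dicut U from ⟨hp, hq⟩)]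
      linarith [hcut_le (q, r), le_one_of_mem_XV hx (q, r)]
  · rw [sigmaCut_of_notMem_dicut x hcut]
    linarith [hcut_le (p, q), hcut_le (q, r), htrans p q r hpq hpr hqr]

theorem sigmaCut_mem_completions {V : Type*} {E0 E1 : Set (V × V)} {U : Set V}
    {x : V × V → ℝ} (hx : x ∈ completions E0 E1) (hcut : E1 ∩ dicut U = ∅) :
    sigmaCut U x ∈ completions E0 E1 := by
  obtain ⟨hxV, h0, h1⟩ := hx
  refine ⟨sigmaCut_mem_XV U hxV, fun e he => ?_, fun e he => ?_⟩
  · unfold sigmaCut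
    split_ifs
    exacts [rfl, h0 e he]
  · have he' : e ∉ dicut U := fun h => Set.notMem_empty e (hcut.subset ⟨he, h⟩)
    rw [sigmaCut_of_notMem_dicut x he', h1 e he]

theorem phi_le_phi_sigmaCut {V : Type*} [Fintype V] {E0 E1 : Set (V × V)} {U : Set V}
    {c x : V × V → ℝ} (hx : x ∈ completions E0 E1)
    (hcond : ∀ pq ∈ dicut U \ E0, c pq ≤ 0) :
    phi c x ≤ phi c (sigmaCut U x) := by
  refine Finset.sum_le_sum fun pq _ => ?_
  by_cases hpq : pq ∈ dicut U
  · rw [sigmaCut_of_mem_dicut x hpq, mul_zero]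
    by_cases he : pq ∈ E0
    · rw [hx.2.1 pq he, mul_zero]
    · exact mul_nonpos_of_nonpos_of_nonneg (hcond pq ⟨hpq, he⟩) (nonneg_of_mem_XV hx.1 pq)
  · rw [sigmaCut_of_notMem_dicut x hpq]

theorem completions_finite {V : Type*} [Finite V] (E0 E1 : Set (V × V)) :
    (completions E0 E1).Finite :=
  (XV_finite V).subset fun _ hx => hx.1

theorem stmt10_general {V : Type*} [Fintype V]
    (E0 E1 : Set (V × V))
    (hne : (completions E0 E1).Nonempty)
    (c : V × V → ℝ) (U : Set V)
    (hcut : E1 ∩ dicut U = ∅)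
    (hcond : ∀ pq ∈ dicut U \ E0, c pq ≤ 0) :
    ∃ xs ∈ completions E0 E1,
      (∀ x ∈ completions E0 E1, phi c x ≤ phi c xs) ∧
      ∀ pq ∈ dicut U \ E0, xs pq = 0 := by
  obtain ⟨x, hx, hmax⟩ := Set.exists_max_image _ (phi c) (completions_finite E0 E1) hne
  exact ⟨sigmaCut U x, sigmaCut_mem_completions hx hcut,
    fun y hy => (hmax y hy).trans (phi_le_phi_sigmaCut hx hcond),
    fun pq hpq => sigmaCut_of_mem_dicut x hpq.1⟩

/-- Directed cut condition (Corollary 7 of the paper). -/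
theorem stmt10 {V : Type*} [Fintype V] [Nonempty V]
    (E0 E1 : Set (V × V)) (hE0 : E0 ⊆ PV V) (hE1 : E1 ⊆ PV V)
    (hdisj : Disjoint E0 E1)
    (hne : (completions E0 E1).Nonempty)
    (hms : maxSpecific E0 E1)
    (c : V × V → ℝ) (U : Set V)
    (hcut : E1 ∩ dicut U = ∅)
    (hcond : ∀ pq ∈ dicut U \ E0, c pq ≤ 0) :
    ∃ xs ∈ completions E0 E1,
      (∀ x ∈ completions E0 E1, phi c x ≤ phi c xs) ∧
      ∀ pq ∈ dicut U \ E0, xs pq = 0 :=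
  stmt10_general E0 E1 hne c U hcut hcond
end

section
/- Let V be a finite nonempty set, U, U' ⊆ V disjoint, U'' := V \ (U ∪ U'), i ∈ U, j ∈ U', and x̂ ∈ X̂_V with ij ∉ dom(x̂). With γ := σ_{ij} ∘ σ_{δ(V\U, U)} ∘ σ_{δ(U', V\U')}, P'_{01} := ({pq ∈ (U × U') ∩ P_V : pi ∉ x̂^{-1}(0) and jq ∉ x̂^{-1}(0)}) \ x̂^{-1}(1), and P'_{10} := (((U'' × U) ∪ (U' × U) ∪ (U' × U'')) ∩ P_V) \ x̂^{-1}(0), it holds that P_{01}[γ^{ij|1}] ⊆ P'_{01} and P_{10}[γ^{ij|1}] ⊆ P'_{10}. -/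
open scoped Classical

/-- `γ := σ_{ij} ∘ σ_{δ(V∖U, U)} ∘ σ_{δ(U', V∖U')}`. -/
noncomputable def gammaMap {V : Type*} (U U' : Set V) (i j : V) :
    (V × V → ℝ) → (V × V → ℝ) :=
  fun x => sigmaJoin i j (sigmaCut Uᶜ (sigmaCut U' x))

/-- `γ^{ij|1}`. -/
noncomputable def gammaCond {V : Type*} (U U' : Set V) (i j : V) :
    (V × V → ℝ) → (V × V → ℝ) :=
  fun x => if x (i, j) = 1 then x else gammaMap U U' i j x

/-- `P'₀₁` of Lemma 13. -/
def P01set {V : Type*} (E0 E1 : Set (V × V)) (U U' : Set V) (i j : V) : Set (V × V) :=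
  {pq | pq.1 ∈ U ∧ pq.2 ∈ U' ∧ pq ∈ PV V ∧ (pq.1, i) ∉ E0 ∧ (j, pq.2) ∉ E0} \ E1

/-- `P'₁₀` of Lemma 13. -/
def P10set {V : Type*} (E0 : Set (V × V)) (U U' : Set V) : Set (V × V) :=
  {pq | pq ∈ PV V ∧
    ((pq.1 ∈ (U ∪ U')ᶜ ∧ pq.2 ∈ U) ∨ (pq.1 ∈ U' ∧ pq.2 ∈ U) ∨
      (pq.1 ∈ U' ∧ pq.2 ∈ (U ∪ U')ᶜ))} \ E0

/-- Lemma 13 of the paper. -/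
theorem stmt11 {V : Type*} [Fintype V] [Nonempty V]
    (E0 E1 : Set (V × V)) (hE0 : E0 ⊆ PV V) (hE1 : E1 ⊆ PV V)
    (hdisj : Disjoint E0 E1)
    (hne : (completions E0 E1).Nonempty)
    (hms : maxSpecific E0 E1)
    (U U' : Set V) (hUU' : Disjoint U U')
    (i j : V) (hi : i ∈ U) (hj : j ∈ U')
    (hdom : (i, j) ∉ E0 ∪ E1) :
    Pmove E0 E1 (gammaCond U U' i j) 0 1 ⊆ P01set E0 E1 U U' i j ∧
    Pmove E0 E1 (gammaCond U U' i j) 1 0 ⊆ P10set E0 U U' := by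
  have hU' : ∀ a ∈ U, a ∉ U' := fun a ha => Set.disjoint_left.mp hUU' ha
  have hU : ∀ a ∈ U', a ∉ U := fun a ha => Set.disjoint_right.mp hUU' ha
  constructor
  · rintro ⟨p, q⟩ ⟨hPV, x, hxc, hx0, hx1⟩
    obtain ⟨⟨hdiag, hbin, htr⟩, h0, h1⟩ := hxc
    by_cases hij : x (i, j) = 1
    · simp only [gammaCond, if_pos hij] at hx1
      rw [hx0] at hx1; norm_num at hx1
    · simp only [gammaCond, if_neg hij, gammaMap, sigmaJoin] at hx1
      by_cases hcond : sigmaCut Uᶜ (sigmaCut U' x) (p, i) = 1 ∧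
          sigmaCut Uᶜ (sigmaCut U' x) (j, q) = 1
      · obtain ⟨hpi, hjq⟩ := hcond
        -- extract p ∈ U and x (p,i) = 1
        have hpU : p ∈ U := by
          by_contra hpU
          simp only [sigmaCut] at hpi
          rw [if_pos ⟨hpU, fun h => h hi⟩] at hpi
          norm_num at hpi
        have hxpi : x (p, i) = 1 := by
          simp only [sigmaCut] at hpi
          rw [if_neg (fun h => h.1 hpU), if_neg (fun h => hU' p hpU h.1)] at hpi
          exact hpi
        have hqU' : q ∈ U' := by
          by_contra hqU'
          simp only [sigmaCut] at hjq
          split_ifs at hjq with h1 h2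
          · norm_num at hjq
          · norm_num at hjq
          · exact h2 ⟨hj, hqU'⟩
        have hxjq : x (j, q) = 1 := by
          simp only [sigmaCut] at hjq
          rw [if_neg (fun h => h.2 (hU q hqU')), if_neg (fun h => h.2 hqU')] at hjq
          exact hjq
        refine ⟨⟨hpU, hqU', hPV, ?_, ?_⟩, ?_⟩
        · intro hmem; rw [h0 _ hmem] at hxpi; norm_num at hxpi
        · intro hmem; rw [h0 _ hmem] at hxjq; norm_num at hxjq
        · intro hmem; rw [h1 _ hmem] at hx0; norm_num at hx0
      · rw [if_neg hcond] at hx1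
        simp only [sigmaCut] at hx1
        rw [hx0] at hx1
        split_ifs at hx1 <;> norm_num at hx1
  · rintro ⟨p, q⟩ ⟨hPV, x, hxc, hx0, hx1⟩
    obtain ⟨⟨hdiag, hbin, htr⟩, h0, h1⟩ := hxc
    have hE0pq : (p, q) ∉ E0 := by
      intro hmem; rw [h0 _ hmem] at hx0; norm_num at hx0
    by_cases hij : x (i, j) = 1
    · simp only [gammaCond, if_pos hij] at hx1
      rw [hx0] at hx1; norm_num at hx1
    · simp only [gammaCond, if_neg hij, gammaMap, sigmaJoin] at hx1
      split_ifs at hx1 with hcond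
      · norm_num at hx1
      · simp only [sigmaCut] at hx1
        refine ⟨⟨hPV, ?_⟩, hE0pq⟩
        by_cases hcut1 : p ∈ Uᶜ ∧ q ∉ Uᶜ
        · have hqU : q ∈ U := not_not.mp hcut1.2
          by_cases hpU' : p ∈ U'
          · exact Or.inr (Or.inl ⟨hpU', hqU⟩)
          · exact Or.inl ⟨fun h => h.elim (fun h' => hcut1.1 h') hpU', hqU⟩
        · rw [if_neg hcut1] at hx1
          by_cases hcut2 : p ∈ U' ∧ q ∉ U'
          · by_cases hqU : q ∈ U
            · exact Or.inr (Or.inl ⟨hcut2.1, hqU⟩)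
            · exact Or.inr (Or.inr ⟨hcut2.1, fun h => h.elim hqU hcut2.2⟩)
          · rw [if_neg hcut2, hx0] at hx1
            norm_num at hx1
end

section
/- Let V be a finite nonempty set, U, U' ⊆ V disjoint, U'' := V \ (U ∪ U'), i ∈ U, j ∈ U', and x̂ ∈ X̂_V with ij ∉ dom(x̂). With γ := σ_{ij} ∘ σ_{δ(V\U, U)} ∘ σ_{δ(U', V\U')}, P'_{01} := ({pq ∈ (U × U') ∩ P_V : pi ∉ x̂^{-1}(0) and jq ∉ x̂^{-1}(0)}) \ x̂^{-1}(1), and P'_{10} := (((U'' × U) ∪ (U' × U) ∪ (U' × U'')) ∩ P_V) \ x̂^{-1}(0): if x̂^{-1}(0) ∩ P'_{01} = ∅ and x̂^{-1}(1) ∩ P'_{10} = ∅, then γ^{ij|1} is true to x̂, i.e., γ^{ij|1}(X_V[x̂]) ⊆ X_V[x̂]. -/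
open scoped Classical

/-- Corollary 14 of the paper: trueness of `γ^{ij|1}`. -/
theorem stmt12 {V : Type*} [Fintype V] [Nonempty V]
    (E0 E1 : Set (V × V)) (hE0 : E0 ⊆ PV V) (hE1 : E1 ⊆ PV V)
    (hdisj : Disjoint E0 E1)
    (hne : (completions E0 E1).Nonempty)
    (hms : maxSpecific E0 E1)
    (U U' : Set V) (hUU' : Disjoint U U')
    (i j : V) (hi : i ∈ U) (hj : j ∈ U')
    (hdom : (i, j) ∉ E0 ∪ E1)
    (h01 : E0 ∩ P01set E0 E1 U U' i j = ∅)
    (h10 : E1 ∩ P10set E0 U U' = ∅) :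
    ∀ x ∈ completions E0 E1, gammaCond U U' i j x ∈ completions E0 E1 := by
  intro x hx
  unfold gammaCond
  split_ifs with hij1
  · exact hx
  clear hij1
  obtain ⟨⟨hx1, hx01, hxtr⟩, hxE0, hxE1⟩ := hx
  have hiU' : i ∉ U' := Set.disjoint_left.mp hUU' hi
  have hjU : j ∉ U := Set.disjoint_right.mp hUU' hj
  -- transitivity of the 1-values of x
  have trans1 : ∀ a b c : V, x (a, b) = 1 → x (b, c) = 1 → x (a, c) = 1 := by
    intro a b c hab hbc
    by_cases hac : a = c
    · subst hac; exact hx1 a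
    by_cases h1 : a = b
    · subst h1; exact hbc
    by_cases h2 : b = c
    · subst h2; exact hab
    have ht := hxtr a b c h1 hac h2
    rcases hx01 (a, c) hac with h | h
    · rw [hab, hbc, h] at ht; linarith
    · exact h
  -- value of the double cut
  have zval : ∀ p q : V, sigmaCut Uᶜ (sigmaCut U' x) (p, q) =
      if (p ∈ U' ∧ q ∉ U') ∨ (p ∉ U ∧ q ∈ U) then 0 else x (p, q) := by
    intro p q
    unfold sigmaCut
    simp only [Set.mem_compl_iff, not_not]
    split_ifs <;> first | rfl | tauto
  have zpi : ∀ p : V, (sigmaCut Uᶜ (sigmaCut U' x) (p, i) = 1) ↔ (p ∈ U ∧ x (p, i) = 1) := by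
    intro p
    rw [zval]
    split_ifs with h
    · constructor
      · intro h1; norm_num at h1
      · rintro ⟨hp, -⟩
        rcases h with ⟨hp', -⟩ | ⟨hp', -⟩
        · exact absurd hp' (Set.disjoint_left.mp hUU' hp)
        · exact absurd hp hp'
    · push_neg at h
      constructor
      · intro h1
        refine ⟨?_, h1⟩
        by_contra hp
        exact (h.2 hp) hi
      · exact fun h1 => h1.2
  have zjq : ∀ q : V, (sigmaCut Uᶜ (sigmaCut U' x) (j, q) = 1) ↔ (q ∈ U' ∧ x (j, q) = 1) := by
    intro q
    rw [zval]
    split_ifs with h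
    · constructor
      · intro h1; norm_num at h1
      · rintro ⟨hq, -⟩
        rcases h with ⟨-, hq'⟩ | ⟨-, hq'⟩
        · exact absurd hq hq'
        · exact absurd hq' (Set.disjoint_right.mp hUU' hq)
    · push_neg at h
      constructor
      · intro h1
        refine ⟨h.1 hj, h1⟩
      · exact fun h1 => h1.2
  -- value of gammaMap
  have wval : ∀ p q : V, gammaMap U U' i j x (p, q) =
      if ((p ∈ U ∧ x (p, i) = 1) ∧ (q ∈ U' ∧ x (j, q) = 1)) then 1
      else if (p ∈ U' ∧ q ∉ U') ∨ (p ∉ U ∧ q ∈ U) then 0 else x (p, q) := by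
    intro p q
    show sigmaJoin i j (sigmaCut Uᶜ (sigmaCut U' x)) (p, q) = _
    unfold sigmaJoin
    simp only [zpi, zjq]
    rw [zval]
  set w := gammaMap U U' i j x with hw
  -- w = 1 characterization
  have wone : ∀ p q : V, w (p, q) = 1 ↔
      ((p ∈ U ∧ x (p, i) = 1) ∧ (q ∈ U' ∧ x (j, q) = 1)) ∨
      (x (p, q) = 1 ∧ ¬((p ∈ U' ∧ q ∉ U') ∨ (p ∉ U ∧ q ∈ U))) := by
    intro p q
    rw [wval]
    split_ifs with h1 h2
    · simp [h1]
    · constructor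
      · intro h; norm_num at h
      · rintro (h | ⟨-, hC⟩)
        · exact absurd h h1
        · exact absurd h2 hC
    · constructor
      · intro h; exact Or.inr ⟨h, h2⟩
      · rintro (h | ⟨h, -⟩)
        · exact absurd h h1
        · exact h
  -- diagonal
  have wdiag : ∀ a : V, w (a, a) = 1 := by
    intro a
    rw [wval]
    split_ifs with h1 h2
    · rfl
    · exfalso; tauto
    · exact hx1 a
  -- 0/1 values
  have w01 : ∀ p q : V, p ≠ q → w (p, q) = 0 ∨ w (p, q) = 1 := by
    intro p q hne'
    rw [wval]
    split_ifs with h1 h2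
    · exact Or.inr rfl
    · exact Or.inl rfl
    · exact hx01 (p, q) hne'
  -- transitivity of the 1-values of w
  have wtrans : ∀ p q r : V, w (p, q) = 1 → w (q, r) = 1 → w (p, r) = 1 := by
    intro p q r h1 h2
    rw [wone] at h1 h2 ⊢
    rcases h1 with ⟨⟨hpU, hpi⟩, hqU', hjq⟩ | ⟨hxpq, hC1⟩
    · rcases h2 with ⟨⟨hqU, -⟩, hr⟩ | ⟨hxqr, hC2⟩
      · exact absurd hqU' (Set.disjoint_left.mp hUU' hqU)
      · push_neg at hC2
        exact Or.inl ⟨⟨hpU, hpi⟩, hC2.1 hqU', trans1 j q r hjq hxqr⟩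
    · rcases h2 with ⟨⟨hqU, hqi⟩, hrU', hjr⟩ | ⟨hxqr, hC2⟩
      · push_neg at hC1
        have hpU : p ∈ U := by
          by_contra hp
          exact (hC1.2 hp) hqU
        exact Or.inl ⟨⟨hpU, trans1 p q i hxpq hqi⟩, hrU', hjr⟩
      · push_neg at hC1 hC2
        refine Or.inr ⟨trans1 p q r hxpq hxqr, ?_⟩
        rintro (⟨hpU', hrU'⟩ | ⟨hpU, hrU⟩)
        · exact hrU' (hC2.1 (hC1.1 hpU'))
        · have hqU : q ∈ U := by
            by_contra hq
            exact (hC2.2 hq) hrU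
          exact hpU (by by_contra hp; exact (hC1.2 hp) hqU)
  refine ⟨⟨wdiag, ?_, ?_⟩, ?_, ?_⟩
  · -- 0/1
    rintro ⟨p, q⟩ hne'
    exact w01 p q hne'
  · -- transitivity inequalities
    intro p q r hpq hpr hqr
    rcases w01 p q hpq with h1 | h1
    · rcases w01 q r hqr with h2 | h2 <;> rcases w01 p r hpr with h3 | h3 <;>
        rw [h1, h2, h3] <;> norm_num
    · rcases w01 q r hqr with h2 | h2
      · rcases w01 p r hpr with h3 | h3 <;> rw [h1, h2, h3] <;> norm_num
      · rw [h1, h2, wtrans p q r h1 h2]; norm_num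
  · -- E0
    rintro ⟨p, q⟩ he
    have hne' : p ≠ q := hE0 he
    rw [wval]
    split_ifs with h1 h2
    · exfalso
      have hmem : (p, q) ∈ E0 ∩ P01set E0 E1 U U' i j := by
        refine ⟨he, ⟨h1.1.1, h1.2.1, hne', ?_, ?_⟩, Set.disjoint_left.mp hdisj he⟩
        · intro hc
          have h0 := hxE0 _ hc
          rw [h1.1.2] at h0
          norm_num at h0
        · intro hc
          have h0 := hxE0 _ hc
          rw [h1.2.2] at h0
          norm_num at h0
      rw [h01] at hmem
      exact hmem
    · rfl
    · exact hxE0 _ he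
  · -- E1
    rintro ⟨p, q⟩ he
    have hne' : p ≠ q := hE1 he
    rw [wone]
    refine Or.inr ⟨hxE1 _ he, ?_⟩
    intro hC
    have hmem : (p, q) ∈ E1 ∩ P10set E0 U U' := by
      refine ⟨he, ⟨hne', ?_⟩, Set.disjoint_right.mp hdisj he⟩
      rcases hC with ⟨hp, hq⟩ | ⟨hp, hq⟩
      · by_cases hqU : q ∈ U
        · exact Or.inr (Or.inl ⟨hp, hqU⟩)
        · refine Or.inr (Or.inr ⟨hp, ?_⟩)
          simp only [Set.mem_compl_iff, Set.mem_union]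
          tauto
      · by_cases hpU' : p ∈ U'
        · exact Or.inr (Or.inl ⟨hpU', hq⟩)
        · refine Or.inl ⟨?_, hq⟩
          simp only [Set.mem_compl_iff, Set.mem_union]
          tauto
    rw [h10] at hmem
    exact hmem
end

section
/- Let V be a finite nonempty set, c : P_V → ℝ, U, U' ⊆ V disjoint, U'' := V \ (U ∪ U'), i ∈ U, j ∈ U', and x̂ ∈ X̂_V with ij ∉ dom(x̂). Define γ := σ_{ij} ∘ σ_{δ(V\U, U)} ∘ σ_{δ(U', V\U')}, P'_{01} := ({pq ∈ (U × U') ∩ P_V : pi ∉ x̂^{-1}(0) and jq ∉ x̂^{-1}(0)}) \ x̂^{-1}(1), and P'_{10} := (((U'' × U) ∪ (U' × U) ∪ (U' × U'')) ∩ P_V) \ x̂^{-1}(0). If γ^{ij|1} is true to x̂ and c_{ij}⁺ ≥ Σ_{pq ∈ P'_{01}} c_{pq}⁻ + Σ_{pq ∈ P'_{10}} c_{pq}⁺, then there exists a maximizer x* of φ_c over X_V[x̂] with x*_{ij} = 1. -/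
open scoped Classical

/-- Join condition (Proposition 15 of the paper). -/
theorem stmt13 {V : Type*} [Fintype V] [Nonempty V]
    (E0 E1 : Set (V × V)) (hE0 : E0 ⊆ PV V) (hE1 : E1 ⊆ PV V)
    (hdisj : Disjoint E0 E1)
    (hne : (completions E0 E1).Nonempty)
    (hms : maxSpecific E0 E1)
    (U U' : Set V) (hUU' : Disjoint U U')
    (i j : V) (hi : i ∈ U) (hj : j ∈ U')
    (hdom : (i, j) ∉ E0 ∪ E1)
    (c : V × V → ℝ)
    (htrue : ∀ x ∈ completions E0 E1, gammaCond U U' i j x ∈ completions E0 E1)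
    (hcond : max (c (i, j)) 0 ≥
      (∑ pq ∈ Finset.univ.filter (fun pq : V × V => pq ∈ P01set E0 E1 U U' i j),
        max (-(c pq)) 0) +
      ∑ pq ∈ Finset.univ.filter (fun pq : V × V => pq ∈ P10set E0 U U'),
        max (c pq) 0) :
    ∃ xs ∈ completions E0 E1,
      (∀ x ∈ completions E0 E1, phi c x ≤ phi c xs) ∧ xs (i, j) = 1 := by
  classical
  have hiU' : i ∉ U' := fun h => Set.disjoint_left.mp hUU' hi h
  have hjU : j ∉ U := fun h => Set.disjoint_left.mp hUU' h hj
  have hij : i ≠ j := fun h => hiU' (h ▸ hj)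
  -- finiteness of completions
  have hfin : (completions E0 E1).Finite := by
    apply Set.Finite.subset
      (Set.Finite.pi (t := fun _ : V × V => ({0, 1} : Set ℝ))
        (fun _ => (Set.finite_singleton 1).insert 0))
    rintro x ⟨⟨hxd, hxb, -⟩, -, -⟩
    rw [Set.mem_univ_pi]
    rintro ⟨p, q⟩
    by_cases h : p = q
    · subst h; right; exact hxd p
    · rcases hxb (p, q) h with h0 | h1
      · left; exact h0
      · right; exact h1
  obtain ⟨x, hx, hmax⟩ := Set.exists_max_image (completions E0 E1) (phi c) hfin hne
  obtain ⟨⟨hxd, hxb, hxt⟩, hx0, hx1⟩ := hx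
  rcases hxb (i, j) hij with hxij | hxij
  swap
  · exact ⟨x, ⟨⟨hxd, hxb, hxt⟩, hx0, hx1⟩, hmax, hxij⟩
  -- x (i,j) = 0 : apply gammaMap
  set y := gammaMap U U' i j x with hy
  have hyc : y ∈ completions E0 E1 := by
    have := htrue x ⟨⟨hxd, hxb, hxt⟩, hx0, hx1⟩
    rwa [gammaCond, if_neg (by rw [hxij]; norm_num)] at this
  obtain ⟨⟨hyd, hyb, hyt⟩, hy0, hy1⟩ := hyc
  -- basic facts about the intermediate cut map
  set z := sigmaCut Uᶜ (sigmaCut U' x) with hz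
  have hzval : ∀ pq : V × V, z pq = if pq.1 ∈ Uᶜ ∧ pq.2 ∉ Uᶜ then 0
      else if pq.1 ∈ U' ∧ pq.2 ∉ U' then 0 else x pq := by
    intro pq; simp [hz, sigmaCut]
  have hyval : ∀ pq : V × V, y pq = if z (pq.1, i) = 1 ∧ z (j, pq.2) = 1 then 1 else z pq := by
    intro pq; simp [hy, gammaMap, sigmaJoin, hz]
  have hyij : y (i, j) = 1 := by
    rw [hyval, if_pos]
    constructor
    · rw [hzval]
      simp only [Set.mem_compl_iff, not_not]
      rw [if_neg (by tauto), if_neg (by tauto)]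
      exact hxd i
    · rw [hzval]
      simp only [Set.mem_compl_iff, not_not]
      rw [if_neg (by tauto), if_neg (by tauto)]
      exact hxd j
  -- membership facts for changed pairs
  have hmem01 : ∀ p q : V, p ≠ q → x (p, q) = 0 → y (p, q) = 1 → (p, q) ≠ (i, j) →
      (p, q) ∈ P01set E0 E1 U U' i j := by
    intro p q hpq hx0' hy1' _
    have hjoin : z (p, i) = 1 ∧ z (j, q) = 1 := by
      by_contra hc
      rw [hyval, if_neg hc, hzval] at hy1'
      simp only at hy1'
      split_ifs at hy1' with h1 h2
      · norm_num at hy1'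
      · norm_num at hy1'
      · rw [hx0'] at hy1'; norm_num at hy1'
    obtain ⟨hzp, hzq⟩ := hjoin
    rw [hzval] at hzp hzq
    simp only [Set.mem_compl_iff, not_not] at hzp hzq
    have hpU : p ∈ U := by
      by_contra hpU
      rw [if_pos ⟨hpU, hi⟩] at hzp; norm_num at hzp
    have hqU : q ∉ U := fun hq => by rw [if_pos ⟨hjU, hq⟩] at hzq; norm_num at hzq
    rw [if_neg (fun h => hqU h.2)] at hzq
    have hqU' : q ∈ U' := by
      by_contra hqU'
      rw [if_pos ⟨hj, hqU'⟩] at hzq; norm_num at hzq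
    rw [if_neg (fun h => h.1 hpU), if_neg (fun h => Set.disjoint_left.mp hUU' hpU h.1)] at hzp
    rw [if_neg (fun h => h.2 hqU')] at hzq
    refine ⟨⟨hpU, hqU', hpq, ?_, ?_⟩, ?_⟩
    · intro hE; rw [hx0 _ hE] at hzp; norm_num at hzp
    · intro hE; rw [hx0 _ hE] at hzq; norm_num at hzq
    · intro hE; rw [hx1 _ hE] at hx0'; norm_num at hx0'
  have hmem10 : ∀ p q : V, p ≠ q → x (p, q) = 1 → y (p, q) = 0 →
      (p, q) ∈ P10set E0 U U' := by
    intro p q hpq hx1' hy0'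
    rw [hyval] at hy0'
    split_ifs at hy0' with hc
    · norm_num at hy0'
    rw [hzval] at hy0'
    simp only [Set.mem_compl_iff, not_not] at hy0'
    split_ifs at hy0' with h1 h2
    · refine ⟨⟨hpq, ?_⟩, fun hE => by rw [hx0 _ hE] at hx1'; norm_num at hx1'⟩
      by_cases hp' : p ∈ U'
      · right; left; exact ⟨hp', h1.2⟩
      · left; exact ⟨fun h => h.elim h1.1 hp', h1.2⟩
    · refine ⟨⟨hpq, ?_⟩, fun hE => by rw [hx0 _ hE] at hx1'; norm_num at hx1'⟩
      by_cases hq' : q ∈ U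
      · right; left; exact ⟨h2.1, hq'⟩
      · right; right; exact ⟨h2.1, fun h => h.elim hq' h2.2⟩
    · rw [hx1'] at hy0'; norm_num at hy0'
  -- P01 and P10 facts
  have hP01_ij : (i, j) ∈ P01set E0 E1 U U' i j :=
    ⟨⟨hi, hj, hij, fun h => hE0 h rfl, fun h => hE0 h rfl⟩,
      fun h => hdom (Set.mem_union_right _ h)⟩
  have hP01P10 : ∀ pq : V × V, pq ∈ P01set E0 E1 U U' i j → pq ∉ P10set E0 U U' := by
    rintro pq ⟨⟨h1, -⟩, -⟩ ⟨⟨-, h⟩, -⟩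
    rcases h with ⟨h, -⟩ | ⟨h, -⟩ | ⟨h, -⟩
    · exact h (Or.inl h1)
    · exact Set.disjoint_left.mp hUU' h1 h
    · exact Set.disjoint_left.mp hUU' h1 h
  have hijP10 : (i, j) ∉ P10set E0 U U' := hP01P10 _ hP01_ij
  -- the pointwise bound
  set g : V × V → ℝ := fun pq =>
    (if pq ∈ P01set E0 E1 U U' i j ∧ pq ≠ (i, j) then -(max (-(c pq)) 0) else 0) +
    (if pq ∈ P10set E0 U U' then -(max (c pq) 0) else 0) +
    (if pq = (i, j) then c (i, j) else 0) with hg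
  have hpt : ∀ pq : V × V, g pq ≤ c pq * (y pq - x pq) := by
    rintro ⟨p, q⟩
    by_cases hpq : p = q
    · subst hpq
      have hxd' := hxd p; have hyd' := hyd p
      rw [hg]
      simp only [hxd', hyd']
      rw [if_neg (by rintro ⟨⟨⟨-, -, h, -⟩, -⟩, -⟩; exact h rfl),
        if_neg (by rintro ⟨⟨h, -⟩, -⟩; exact h rfl),
        if_neg (by rintro h; exact hij (by injection h with h1 h2; rw [← h1, ← h2]))]
      norm_num
    · have hnegle : -(max (-(c (p, q))) 0) ≤ c (p, q) := by
        have := le_max_left (-(c (p, q))) 0; linarith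
      have hposle : -(max (c (p, q)) 0) ≤ -(c (p, q)) := by
        have := le_max_left (c (p, q)) 0; linarith
      have h1nn : (0:ℝ) ≤ max (-(c (p, q))) 0 := le_max_right _ _
      have h2nn : (0:ℝ) ≤ max (c (p, q)) 0 := le_max_right _ _
      rcases hxb (p, q) hpq with hx' | hx' <;> rcases hyb (p, q) hpq with hy' | hy'
      · -- x=0, y=0 : (p,q) ≠ (i,j) since y(i,j)=1
        have hne' : (p, q) ≠ (i, j) := fun h => by rw [h, hyij] at hy'; norm_num at hy'
        rw [hg]; simp only [hx', hy', if_neg hne']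
        split_ifs <;> linarith
      · -- x=0, y=1
        by_cases hne' : (p, q) = (i, j)
        · injection hne' with h1 h2; subst h1; subst h2
          rw [hg]
          simp only [hx', hy', if_pos rfl, if_neg hijP10,
            if_neg (show ¬((p, q) ∈ P01set E0 E1 U U' p q ∧ (p, q) ≠ (p, q)) from
              fun h => h.2 rfl)]
          norm_num
        · have hm := hmem01 p q hpq hx' hy' hne'
          rw [hg]
          simp only [hx', hy',
            if_pos (show (p, q) ∈ P01set E0 E1 U U' i j ∧ (p, q) ≠ (i, j) from ⟨hm, hne'⟩),
            if_neg (hP01P10 _ hm), if_neg hne']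
          linarith
      · -- x=1, y=0
        have hm := hmem10 p q hpq hx' hy'
        have hne' : (p, q) ≠ (i, j) := fun h => by rw [h, hyij] at hy'; norm_num at hy'
        rw [hg]
        simp only [hx', hy', if_pos hm, if_neg hne',
          if_neg (show ¬((p, q) ∈ P01set E0 E1 U U' i j ∧ (p, q) ≠ (i, j)) from
            fun h => hP01P10 _ h.1 hm)]
        linarith
      · -- x=1, y=1 : (p,q) ≠ (i,j) since x(i,j)=0
        have hne' : (p, q) ≠ (i, j) := fun h => by rw [h, hxij] at hx'; norm_num at hx'
        rw [hg]; simp only [hx', hy', if_neg hne']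
        split_ifs <;> linarith
  -- sum the pointwise bound
  have hsum : ∑ pq : V × V, g pq ≤ ∑ pq : V × V, c pq * (y pq - x pq) :=
    Finset.sum_le_sum (fun pq _ => hpt pq)
  -- compute the sum of g
  have hgsum : ∑ pq : V × V, g pq =
      (∑ pq ∈ Finset.univ.filter
          (fun pq : V × V => pq ∈ P01set E0 E1 U U' i j ∧ pq ≠ (i, j)),
        -(max (-(c pq)) 0)) +
      (∑ pq ∈ Finset.univ.filter (fun pq : V × V => pq ∈ P10set E0 U U'),
        -(max (c pq) 0)) + c (i, j) := by
    rw [hg]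
    rw [Finset.sum_add_distrib, Finset.sum_add_distrib]
    congr 1
    · congr 1
      · rw [Finset.sum_filter]
      · rw [Finset.sum_filter]
    · rw [Finset.sum_ite_eq' Finset.univ (i, j) (fun _ => c (i, j))]
      simp
  -- relate the P01 ∧ ≠(i,j) sum to the full P01 sum
  have herase : Finset.univ.filter
      (fun pq : V × V => pq ∈ P01set E0 E1 U U' i j ∧ pq ≠ (i, j)) =
      (Finset.univ.filter (fun pq : V × V => pq ∈ P01set E0 E1 U U' i j)).erase (i, j) := by
    ext pq
    simp only [Finset.mem_filter, Finset.mem_erase, Finset.mem_univ, true_and]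
    tauto
  have hP01sum : (∑ pq ∈ Finset.univ.filter
        (fun pq : V × V => pq ∈ P01set E0 E1 U U' i j ∧ pq ≠ (i, j)),
      max (-(c pq)) 0) + max (-(c (i, j))) 0 =
      ∑ pq ∈ Finset.univ.filter (fun pq : V × V => pq ∈ P01set E0 E1 U U' i j),
        max (-(c pq)) 0 := by
    rw [herase]
    exact Finset.sum_erase_add _ _ (Finset.mem_filter.mpr ⟨Finset.mem_univ _, hP01_ij⟩)
  -- conclude phi c y ≥ phi c x
  have hdiff : phi c x ≤ phi c y := by
    have hsplit : phi c y - phi c x = ∑ pq : V × V, c pq * (y pq - x pq) := by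
      rw [phi, phi, ← Finset.sum_sub_distrib]
      rw [Finset.sum_filter]
      congr 1; ext pq
      by_cases h : pq.1 = pq.2
      · have hx' : x pq = 1 := by
          have := hxd pq.1; rwa [show (pq.1, pq.1) = pq from by simp [Prod.ext_iff, h]] at this
        have hy' : y pq = 1 := by
          have := hyd pq.1; rwa [show (pq.1, pq.1) = pq from by simp [Prod.ext_iff, h]] at this
        rw [if_neg (by simpa using h), hx', hy']; ring
      · rw [if_pos h]; ring
    have hfinal : 0 ≤ ∑ pq : V × V, c pq * (y pq - x pq) := by
      refine le_trans ?_ hsum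
      rw [hgsum]
      have hid : max (c (i, j)) 0 - max (-(c (i, j))) 0 = c (i, j) :=
        max_zero_sub_max_neg_zero_eq_self (c (i, j))
      rw [Finset.sum_neg_distrib, Finset.sum_neg_distrib]
      linarith [hP01sum, hcond]
    linarith [hsplit, hfinal]
  exact ⟨y, ⟨⟨hyd, hyb, hyt⟩, hy0, hy1⟩, fun x' hx' => le_trans (hmax x' hx') hdiff, hyij⟩
end

section
/- Let V be a finite nonempty set, c : P_V → ℝ and x̂ ∈ X̂_V. Let x⁺ ∈ {0,1}^{P_V} be defined by x⁺_e = 1 if e ∉ dom(x̂) and c_e ≥ 0, x⁺_e = 0 if e ∉ dom(x̂) and c_e < 0, and x⁺_e = x̂_e if e ∈ dom(x̂). Let ij ∈ P_V \ dom(x̂) with c_{ij} ≥ 0 (so x⁺_{ij} = 1). If x⁺ ∈ X_V[x̂], then: (1) max{φ_c(x) : x ∈ X_V[x̂], x_{ij} = 1} = φ_c(x⁺); (2) max{φ_c(x) : x ∈ X_V[x̂], x_{ij} = 0} = max{ φ_c(σ_{δ(U,V\U)}(x⁺)) : U ⊆ V, ij ∈ δ(U, V\U), δ(U, V\U) ∩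 x̂^{-1}(1) = ∅ } = φ_c(x⁺) − min{ Σ_{pq ∈ δ(U, V\U) \ x̂^{-1}(0)} c_{pq}⁺ : U ⊆ V, ij ∈ δ(U, V\U), δ(U, V\U) ∩ x̂^{-1}(1) = ∅ }. -/
open scoped Classical

/-- The canonical completion `x⁺` (with the diagonal convention `x⁺_{aa} = 1`). -/
noncomputable def xplus {V : Type*} (E0 E1 : Set (V × V)) (c : V × V → ℝ) : V × V → ℝ :=
  fun e =>
    if e.1 = e.2 then 1
    else if e ∈ E1 then 1
    else if e ∈ E0 then 0
    else if 0 ≤ c e then 1 else 0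

/-- Tractable bounds (Proposition 20 of the paper). -/
theorem stmt18 {V : Type*} [Fintype V] [Nonempty V]
    (E0 E1 : Set (V × V)) (hE0 : E0 ⊆ PV V) (hE1 : E1 ⊆ PV V)
    (hdisj : Disjoint E0 E1)
    (hne : (completions E0 E1).Nonempty)
    (hms : maxSpecific E0 E1)
    (c : V × V → ℝ) (i j : V) (hij : (i, j) ∈ PV V) (hdom : (i, j) ∉ E0 ∪ E1)
    (hc : 0 ≤ c (i, j))
    (hxplus : xplus E0 E1 c ∈ completions E0 E1) :
    sSup (phi c '' {x ∈ completions E0 E1 | x (i, j) = 1}) = phi c (xplus E0 E1 c) ∧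
    sSup (phi c '' {x ∈ completions E0 E1 | x (i, j) = 0}) =
      sSup ((fun U : Set V => phi c (sigmaCut U (xplus E0 E1 c))) ''
        {U : Set V | i ∈ U ∧ j ∉ U ∧ dicut U ∩ E1 = ∅}) ∧
    sSup (phi c '' {x ∈ completions E0 E1 | x (i, j) = 0}) =
      phi c (xplus E0 E1 c) -
        sInf ((fun U : Set V =>
            ∑ pq ∈ Finset.univ.filter (fun pq : V × V => pq ∈ dicut U ∧ pq ∉ E0),
              max (c pq) 0) ''
          {U : Set V | i ∈ U ∧ j ∉ U ∧ dicut U ∩ E1 = ∅}) := by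

  classical
  have hxpC := hxplus
  set xp := xplus E0 E1 c with hxp
  obtain ⟨⟨hxpdiag, hxp01, hxptrans⟩, hxpE0, hxpE1⟩ := hxplus
  have hij' : i ≠ j := hij
  have hnotE1 : (i, j) ∉ E1 := fun h => hdom (Or.inr h)
  have hnotE0 : (i, j) ∉ E0 := fun h => hdom (Or.inl h)
  have hxpij : xp (i, j) = 1 := by
    simp [hxp, xplus, hij', hnotE0, hnotE1, hc]
  have hxpbd : ∀ e : V × V, 0 ≤ xp e ∧ xp e ≤ 1 := by
    intro e
    simp only [hxp, xplus]
    split_ifs <;> norm_num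
  -- termwise bound
  have hterm : ∀ x ∈ completions E0 E1, ∀ e : V × V, e.1 ≠ e.2 →
      c e * x e ≤ c e * xp e := by
    rintro x ⟨⟨hd, h01, htr⟩, hx0, hx1⟩ e he
    by_cases h1 : e ∈ E1
    · rw [hx1 e h1, hxpE1 e h1]
    by_cases h0 : e ∈ E0
    · rw [hx0 e h0, hxpE0 e h0]
    have hxpe : xp e = if 0 ≤ c e then 1 else 0 := by
      simp [hxp, xplus, he, h0, h1]
    rw [hxpe]
    rcases le_or_gt 0 (c e) with hcp | hcn
    · rw [if_pos hcp]
      rcases h01 e he with hx | hx <;> rw [hx] <;> nlinarith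
    · rw [if_neg (not_le.mpr hcn)]
      rcases h01 e he with hx | hx <;> rw [hx] <;> nlinarith
  have key_le : ∀ x ∈ completions E0 E1, phi c x ≤ phi c xp := by
    intro x hx
    refine Finset.sum_le_sum ?_
    intro e he
    exact hterm x hx e (Finset.mem_filter.mp he).2
  -- existence of a completion with value 0 at (i,j)
  have hundec : ¬ decidedPair E0 E1 (i, j) := by
    intro h
    have : (i, j) ∈ E0 ∪ E1 := by rw [← hms]; exact ⟨hij, h⟩
    exact hdom this
  have hex0 : ∃ x ∈ completions E0 E1, x (i, j) = 0 := by
    by_contra hcon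
    push_neg at hcon
    apply hundec
    intro x hx x' hx'
    have h1 : x (i, j) = 1 := by
      obtain ⟨⟨-, h01, -⟩, -, -⟩ := id hx
      rcases h01 (i, j) hij' with h | h
      · exact absurd h (hcon x hx)
      · exact h
    have h2 : x' (i, j) = 1 := by
      obtain ⟨⟨-, h01, -⟩, -, -⟩ := id hx'
      rcases h01 (i, j) hij' with h | h
      · exact absurd h (hcon x' hx')
      · exact h
    rw [h1, h2]
  set S : Set (Set V) := {U : Set V | i ∈ U ∧ j ∉ U ∧ dicut U ∩ E1 = ∅} with hS
  -- cut construction from a completion with x(i,j) = 0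
  have cutfacts : ∀ x ∈ completions E0 E1, x (i, j) = 0 →
      ∃ U ∈ S, phi c x ≤ phi c (sigmaCut U xp) := by
    intro x hx hx00
    have hxC := hx
    obtain ⟨⟨hd, h01, htr⟩, hxE0, hxE1⟩ := hx
    set U : Set V := {v | x (v, j) ≠ 1} with hU
    have hiU : i ∈ U := by
      simp only [hU, Set.mem_setOf_eq, hx00]
      norm_num
    have hjU : j ∉ U := by
      simp only [hU, Set.mem_setOf_eq, hd j, not_not]
    have hcut0 : ∀ e ∈ dicut U, x e = 0 := by
      rintro ⟨p, q⟩ ⟨hp, hq⟩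
      simp only [hU, Set.mem_setOf_eq, not_not] at hp hq
      have hpq : p ≠ q := fun h => hp (h ▸ hq)
      rcases h01 (p, q) hpq with h | h
      · exact h
      · exfalso
        by_cases hqj : q = j
        · exact hp (by rw [← hqj]; exact h)
        · have hpj : p ≠ j := fun hh => hp (hh ▸ hd j)
          have htr' := htr p q j hpq hpj hqj
          rw [h, hq] at htr'
          rcases h01 (p, j) hpj with h2 | h2
          · rw [h2] at htr'; linarith
          · exact hp h2
    have hE1cut : dicut U ∩ E1 = ∅ := by
      rw [Set.eq_empty_iff_forall_notMem]
      rintro e ⟨hed, he1⟩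
      have h0 := hcut0 e hed
      rw [hxE1 e he1] at h0
      norm_num at h0
    refine ⟨U, ⟨hiU, hjU, hE1cut⟩, ?_⟩
    refine Finset.sum_le_sum ?_
    intro e he
    have hene := (Finset.mem_filter.mp he).2
    by_cases hdc : e ∈ dicut U
    · obtain ⟨h1, h2⟩ := hdc
      rw [hcut0 e ⟨h1, h2⟩]
      have : sigmaCut U xp e = 0 := by
        simp only [sigmaCut]
        rw [if_pos ⟨h1, h2⟩]
      rw [this]
    · have : sigmaCut U xp e = xp e := by
        simp only [sigmaCut]
        exact if_neg hdc
      rw [this]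
      exact hterm x hxC e hene
  -- sigmaCut of xp over a valid cut is a completion
  have hsigma_mem : ∀ U ∈ S, sigmaCut U xp ∈ completions E0 E1 ∧ sigmaCut U xp (i, j) = 0 := by
    rintro U ⟨hiU, hjU, hUE1⟩
    have hnotcut : ∀ e ∈ E1, ¬(e.1 ∈ U ∧ e.2 ∉ U) := by
      intro e he hcc
      exact Set.eq_empty_iff_forall_notMem.mp hUE1 e ⟨hcc, he⟩
    have hb : ∀ e : V × V, 0 ≤ sigmaCut U xp e ∧ sigmaCut U xp e ≤ 1 := by
      intro e
      simp only [sigmaCut]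
      split_ifs
      · norm_num
      · exact hxpbd e
    refine ⟨⟨⟨?_, ?_, ?_⟩, ?_, ?_⟩, ?_⟩
    · intro a
      simp only [sigmaCut]
      rw [if_neg (fun h : a ∈ U ∧ a ∉ U => h.2 h.1)]
      exact hxpdiag a
    · intro pq hpq
      simp only [sigmaCut]
      split_ifs with h
      · exact Or.inl rfl
      · exact hxp01 pq hpq
    · intro p q r hpq hpr hqr
      by_cases h1 : p ∈ U ∧ q ∉ U
      · have e1 : sigmaCut U xp (p, q) = 0 := by
          simp only [sigmaCut]; exact if_pos h1
        have b2 := (hb (q, r)).2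
        have b3 := (hb (p, r)).1
        linarith [e1]
      by_cases h2 : q ∈ U ∧ r ∉ U
      · have e2 : sigmaCut U xp (q, r) = 0 := by
          simp only [sigmaCut]; exact if_pos h2
        have b1 := (hb (p, q)).2
        have b3 := (hb (p, r)).1
        linarith [e2]
      have e1 : sigmaCut U xp (p, q) = xp (p, q) := by
        simp only [sigmaCut]; exact if_neg h1
      have e2 : sigmaCut U xp (q, r) = xp (q, r) := by
        simp only [sigmaCut]; exact if_neg h2
      have e3 : sigmaCut U xp (p, r) = xp (p, r) := by
        simp only [sigmaCut]
        refine if_neg ?_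
        rintro ⟨hpU, hrU⟩
        by_cases hq : q ∈ U
        · exact h2 ⟨hq, hrU⟩
        · exact h1 ⟨hpU, hq⟩
      rw [e1, e2, e3]
      exact hxptrans p q r hpq hpr hqr
    · intro e he
      simp only [sigmaCut]
      split_ifs with h
      · rfl
      · exact hxpE0 e he
    · intro e he
      simp only [sigmaCut]
      rw [if_neg (hnotcut e he)]
      exact hxpE1 e he
    · simp only [sigmaCut]
      exact if_pos ⟨hiU, hjU⟩
  -- the per-cut sum identity
  have hsum : ∀ U ∈ S,
      phi c (sigmaCut U xp) = phi c xp -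
        ∑ pq ∈ Finset.univ.filter (fun pq : V × V => pq ∈ dicut U ∧ pq ∉ E0),
          max (c pq) 0 := by
    rintro U ⟨hiU, hjU, hUE1⟩
    have key : ∀ e : V × V,
        (if e.1 ≠ e.2 then c e * xp e - c e * sigmaCut U xp e else 0)
          = if e ∈ dicut U ∧ e ∉ E0 then max (c e) 0 else 0 := by
      intro e
      by_cases hdc : e ∈ dicut U
      · obtain ⟨h1, h2⟩ := hdc
        have hne : e.1 ≠ e.2 := fun h => h2 (h ▸ h1)
        have hσ : sigmaCut U xp e = 0 := by
          simp only [sigmaCut]; exact if_pos ⟨h1, h2⟩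
        have he1 : e ∉ E1 := fun h =>
          Set.eq_empty_iff_forall_notMem.mp hUE1 e ⟨⟨h1, h2⟩, h⟩
        rw [if_pos hne, hσ]
        by_cases h0 : e ∈ E0
        · rw [if_neg (fun hh => hh.2 h0), hxpE0 e h0]
          ring
        · rw [if_pos ⟨⟨h1, h2⟩, h0⟩]
          have hxpe : xp e = if 0 ≤ c e then 1 else 0 := by
            simp [hxp, xplus, hne, h0, he1]
          rw [hxpe]
          rcases le_or_gt 0 (c e) with h | h
          · rw [if_pos h, max_eq_left h]; ring
          · rw [if_neg (not_le.mpr h), max_eq_right h.le]; ring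
      · have hσ : sigmaCut U xp e = xp e := by
          simp only [sigmaCut]; exact if_neg hdc
        rw [hσ, if_neg (show ¬(e ∈ dicut U ∧ e ∉ E0) from fun hh => hdc hh.1)]
        split_ifs <;> ring
    have h2 : phi c xp - phi c (sigmaCut U xp)
        = ∑ pq ∈ Finset.univ.filter (fun pq : V × V => pq ∈ dicut U ∧ pq ∉ E0),
            max (c pq) 0 := by
      rw [phi, phi, ← Finset.sum_sub_distrib, Finset.sum_filter, Finset.sum_filter]
      exact Finset.sum_congr rfl (fun e _ => key e)
    linarith
  obtain ⟨x0, hx0C, hx00⟩ := hex0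
  obtain ⟨U0, hU0S, hU0le⟩ := cutfacts x0 hx0C hx00
  have hAbd : ∀ b ∈ phi c '' {x ∈ completions E0 E1 | x (i, j) = 0}, b ≤ phi c xp := by
    rintro b ⟨x, ⟨hxC, -⟩, rfl⟩
    exact key_le x hxC
  have hAbdd : BddAbove (phi c '' {x ∈ completions E0 E1 | x (i, j) = 0}) :=
    ⟨phi c xp, fun b hb => hAbd b hb⟩
  have hAne : (phi c '' {x ∈ completions E0 E1 | x (i, j) = 0}).Nonempty :=
    ⟨phi c x0, x0, ⟨hx0C, hx00⟩, rfl⟩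
  have hB_bdd : BddAbove ((fun U : Set V => phi c (sigmaCut U xp)) '' S) :=
    (S.toFinite.image _).bddAbove
  -- part 1
  have part1 : sSup (phi c '' {x ∈ completions E0 E1 | x (i, j) = 1}) = phi c xp := by
    have hub : ∀ b ∈ phi c '' {x ∈ completions E0 E1 | x (i, j) = 1}, b ≤ phi c xp := by
      rintro b ⟨x, ⟨hxC, -⟩, rfl⟩
      exact key_le x hxC
    have hmem : phi c xp ∈ phi c '' {x ∈ completions E0 E1 | x (i, j) = 1} :=
      ⟨xp, ⟨hxpC, hxpij⟩, rfl⟩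
    exact le_antisymm (csSup_le ⟨_, hmem⟩ hub)
      (le_csSup ⟨phi c xp, fun b hb => hub b hb⟩ hmem)
  -- part 2
  have part2 : sSup (phi c '' {x ∈ completions E0 E1 | x (i, j) = 0}) =
      sSup ((fun U : Set V => phi c (sigmaCut U xp)) '' S) := by
    apply le_antisymm
    · refine csSup_le hAne ?_
      rintro b ⟨x, ⟨hxC, hx0'⟩, rfl⟩
      obtain ⟨U, hUS, hle⟩ := cutfacts x hxC hx0'
      exact hle.trans (le_csSup hB_bdd ⟨U, hUS, rfl⟩)
    · refine csSup_le ⟨_, U0, hU0S, rfl⟩ ?_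
      rintro b ⟨U, hUS, rfl⟩
      obtain ⟨hmem, hval⟩ := hsigma_mem U hUS
      exact le_csSup hAbdd ⟨_, ⟨hmem, hval⟩, rfl⟩
  -- part 3
  set f : Set V → ℝ := fun U =>
    ∑ pq ∈ Finset.univ.filter (fun pq : V × V => pq ∈ dicut U ∧ pq ∉ E0), max (c pq) 0
    with hf
  have part3 : sSup (phi c '' {x ∈ completions E0 E1 | x (i, j) = 0}) =
      phi c xp - sInf (f '' S) := by
    rw [part2]
    have himg : (fun U : Set V => phi c (sigmaCut U xp)) '' S
        = (fun U => phi c xp - f U) '' S := by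
      apply Set.image_congr
      intro U hU
      exact hsum U hU
    rw [himg]
    have hFfin : (f '' S).Finite := S.toFinite.image _
    have hFne : (f '' S).Nonempty := ⟨_, U0, hU0S, rfl⟩
    obtain ⟨Um, hUmS, hUmval⟩ := hFne.csInf_mem hFfin
    apply le_antisymm
    · refine csSup_le ⟨_, U0, hU0S, rfl⟩ ?_
      rintro b ⟨U, hUS, rfl⟩
      have : sInf (f '' S) ≤ f U := csInf_le hFfin.bddBelow ⟨U, hUS, rfl⟩
      dsimp only
      linarith
    · have heq : phi c xp - sInf (f '' S) = phi c xp - f Um := by rw [hUmval]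
      rw [heq]
      exact le_csSup ((S.toFinite.image _).bddAbove) ⟨Um, hUmS, rfl⟩
  exact ⟨part1, part2, part3⟩
end

section
/- Let V be a finite nonempty set, U ⊆ V, x̂ ∈ X̂_V, x ∈ X_V[x̂], x̂' := x̂ restricted to P_U, and y ∈ X_U[x̂']. Define τ^y_{δ(U,V\U)}(x) ∈ {0,1}^{P_V} by: τ(x)_{pq} = y_{pq} if pq ∈ P_U; τ(x)_{pq} = 0 if pq ∈ δ(U, V\U); for pq ∈ δ(V\U, U), τ(x)_{pq} = 1 if there exists r ∈ U with x_{pr} = 1 and y_{rq} = 1 and τ(x)_{pq} = 0 otherwise; τ(x)_{pq} = x_{pq} if pq ∈ P_{V\U}. Let P'_{01} := ({pq ∈ δ(V\U, U) : ∃ r ∈ U with pr ∉ x̂^{-1}(0) and y_{rq} = 1}) \ x̂^{-1}(1), P''_{01} := δ(V\U, U) \ x̂^{-1}(1), and P'_{10} = P''_{10} := δ(U, V\U) \ x̂^{-1}(0). Then P_{01}[τ^y_{δ(U,V\U)}] ∩ δ(U) ⊆ P'_{01} ⊆ P''_{01} and P_{10}[τ^y_{δ(U,V\U)}] ∩ δ(U)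 ⊆ P'_{10} = P''_{10}. -/
open scoped Classical

/-- The map `τ^y_{δ(U, V∖U)}`. -/
noncomputable def tauOut {V : Type*} (U : Set V) (y : ↥U × ↥U → ℝ)
    (x : V × V → ℝ) : V × V → ℝ :=
  fun pq =>
    if h1 : pq.1 ∈ U then
      if h2 : pq.2 ∈ U then y (⟨pq.1, h1⟩, ⟨pq.2, h2⟩) else 0
    else
      if h2 : pq.2 ∈ U then
        if ∃ r : V, ∃ hr : r ∈ U, x (pq.1, r) = 1 ∧ y (⟨r, hr⟩, ⟨pq.2, h2⟩) = 1 then 1 else 0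
      else x pq

/-- Lemma 21 (1) of the paper. -/
theorem stmt19 {V : Type*} [Fintype V] [Nonempty V]
    (E0 E1 : Set (V × V)) (hE0 : E0 ⊆ PV V) (hE1 : E1 ⊆ PV V)
    (hdisj : Disjoint E0 E1)
    (hne : (completions E0 E1).Nonempty)
    (hms : maxSpecific E0 E1)
    (U : Set V)
    (y : ↥U × ↥U → ℝ) (hy : y ∈ completions (resSet U E0) (resSet U E1)) :
    (Pmove E0 E1 (tauOut U y) 0 1 ∩ (dicut U ∪ {pq : V × V | pq.1 ∉ U ∧ pq.2 ∈ U}) ⊆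
        ({pq : V × V | pq.1 ∉ U ∧ ∃ h2 : pq.2 ∈ U, ∃ r : V, ∃ hr : r ∈ U,
          (pq.1, r) ∉ E0 ∧ y (⟨r, hr⟩, ⟨pq.2, h2⟩) = 1} \ E1)) ∧
    (({pq : V × V | pq.1 ∉ U ∧ ∃ h2 : pq.2 ∈ U, ∃ r : V, ∃ hr : r ∈ U,
          (pq.1, r) ∉ E0 ∧ y (⟨r, hr⟩, ⟨pq.2, h2⟩) = 1} \ E1) ⊆
        ({pq : V × V | pq.1 ∉ U ∧ pq.2 ∈ U} \ E1)) ∧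
    (Pmove E0 E1 (tauOut U y) 1 0 ∩ (dicut U ∪ {pq : V × V | pq.1 ∉ U ∧ pq.2 ∈ U}) ⊆
        dicut U \ E0) := by
  
  obtain ⟨⟨hydiag, -, -⟩, hy0, hy1⟩ := hy
  refine ⟨?_, ?_, ?_⟩
  · rintro ⟨p, q⟩ ⟨⟨hPV, x, hx, hx0, hτ1⟩, hmem⟩
    have hx0E := hx.2.1
    have hx1E := hx.2.2
    rcases hmem with ⟨h1, h2⟩ | ⟨h1, h2⟩
    · exfalso
      simp only [tauOut, dif_pos h1, dif_neg h2] at hτ1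
      norm_num at hτ1
    · simp only [tauOut, dif_neg h1, dif_pos h2] at hτ1
      by_cases hex : ∃ r : V, ∃ hr : r ∈ U, x (p, r) = 1 ∧ y (⟨r, hr⟩, ⟨q, h2⟩) = 1
      · obtain ⟨r, hr, hxpr, hyr⟩ := hex
        refine ⟨⟨h1, h2, r, hr, ?_, hyr⟩, fun hE1 => ?_⟩
        · intro hpr0
          have := hx0E _ hpr0
          rw [hxpr] at this; norm_num at this
        · have := hx1E _ hE1
          rw [hx0] at this; norm_num at this
      · rw [if_neg hex] at hτ1; norm_num at hτ1
  · rintro ⟨p, q⟩ ⟨⟨h1, h2, -⟩, hE1⟩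
    exact ⟨⟨h1, h2⟩, hE1⟩
  · rintro ⟨p, q⟩ ⟨⟨hPV, x, hx, hx1, hτ0⟩, hmem⟩
    have hx0E := hx.2.1
    rcases hmem with ⟨h1, h2⟩ | ⟨h1, h2⟩
    · refine ⟨⟨h1, h2⟩, fun hE0 => ?_⟩
      have := hx0E _ hE0
      rw [hx1] at this; norm_num at this
    · exfalso
      simp only [tauOut, dif_neg h1, dif_pos h2] at hτ0
      have hex : ∃ r : V, ∃ hr : r ∈ U, x (p, r) = 1 ∧ y (⟨r, hr⟩, ⟨q, h2⟩) = 1 :=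
        ⟨q, h2, hx1, hydiag _⟩
      rw [if_pos hex] at hτ0; norm_num at hτ0
end
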